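/- Let q, a, x, u, y ∈ ℂ with 0 < |q| < 1, |u| ≤ 1, |a y| < 1, x ≠ 0, and 1 - a q^j x ≠ 0 for all j ≥ 0, and let n ∈ ℕ. Then ∑_{i=0}^{n} (u q)^{C(i,2)} [n choose i]_q ((-a y)^i / (a q^n x;q)_i) · ∑_{m=0}^{∞} u^{C(m,2)} (q^n;q)_m (u^i a y)^m / ((q;q)_m (a q^{n+i} x;q)_m) = 1. -/

import Mathlib

/-- The finite q-shifted factorial (a;q)_n = ∏_{j=0}^{n-1} (1 - a q^j). -/
noncomputable def qPoch (q a : ℂ) (n : ℕ) : ℂ :=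
  ∏ j ∈ Finset.range n, (1 - a * q ^ j)

/-- The q-binomial coefficient [n choose k]_q = (q;q)_n / ((q;q)_k (q;q)_{n-k}). -/
noncomputable def qBinom (q : ℂ) (n k : ℕ) : ℂ :=
  qPoch q q n / (qPoch q q k * qPoch q q (n - k))

/-!
Put `k = i + m` and `c = a qⁿ x`. Since `C(i+m,2) = C(i,2) + C(m,2) + i m` and
`(c;q)_{i+m} = (c;q)_i (c qⁱ;q)_m`, the `(i, m)` term factors as `u^{C(k,2)} (a y)^k / (c;q)_k`
times `αᵢ βₘ`, where `αᵢ = (-1)ⁱ q^{C(i,2)} [n choose i]_q` is the coefficient of `zⁱ` in `(z;q)ₙ`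
and `βₘ = (qⁿ;q)ₘ / (q;q)ₘ` that of `zᵐ` in `1 / (z;q)ₙ`. So the `k`-th diagonal sum is the
`k`-th coefficient of `(z;q)ₙ / (z;q)ₙ = 1`, and only `k = 0` survives. Regrouping along diagonals
is legitimate because the outer sum is finite and each inner series converges by the ratio test.

The product identity holds for formal power series and any `a` in place of `qⁿ`:
`F = ∑ (a;q)ₘ/(q;q)ₘ zᵐ` and `G = ∑ ∏_{j<i} (a - qʲ)/(q;q)ᵢ zⁱ` satisfy
`(1 - z) F(z) = (1 - a z) F(q z)` and `(1 - a z) G(z) = (1 - z) G(q z)`, so `H = G F` satisfies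
`H(z) = H(q z)`, which forces `H = H(0) = 1` when `q` is not a root of unity.
-/

open Finset PowerSeries Filter Topology

lemma Nat.add_choose_two (i m : ℕ) : (i + m).choose 2 = i.choose 2 + m.choose 2 + i * m := by
  induction m with
  | zero => simp
  | succ m ih =>
    rw [← add_assoc, Nat.choose_succ_succ, ih, Nat.choose_succ_succ m, Nat.choose_one_right,
      Nat.choose_one_right]
    ring

lemma qPoch_succ (q a : ℂ) (n : ℕ) : qPoch q a (n + 1) = qPoch q a n * (1 - a * q ^ n) :=
  prod_range_succ _ _

lemma qPoch_add (q a : ℂ) (i m : ℕ) :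
    qPoch q a (i + m) = qPoch q a i * qPoch q (a * q ^ i) m := by
  simp only [qPoch, prod_range_add, pow_add, mul_assoc]

lemma qPoch_self_ne_zero {q : ℂ} (hq : ∀ k, q ^ (k + 1) ≠ 1) (m : ℕ) : qPoch q q m ≠ 0 :=
  prod_ne_zero_iff.2 fun j _ => by rw [← pow_succ']; exact sub_ne_zero.2 (hq j).symm

lemma prod_range_pow_sub_pow_mul_qPoch (q : ℂ) (i d : ℕ) :
    (∏ j ∈ range i, (q ^ (i + d) - q ^ j)) * qPoch q q d =
      (-1) ^ i * q ^ i.choose 2 * qPoch q q (i + d) := by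
  induction i with
  | zero => simp
  | succ i ih =>
    have hfactor : ∀ j ∈ range i, q ^ (i + 1 + d) - q ^ (j + 1) = q * (q ^ (i + d) - q ^ j) :=
      fun j _ => by ring
    rw [prod_range_succ', prod_congr rfl hfactor, prod_mul_distrib, prod_const, card_range,
      add_right_comm, qPoch_succ, Nat.choose_succ_succ, Nat.choose_one_right]
    linear_combination (q ^ i * (q ^ (i + d + 1) - 1)) * ih

lemma one_sub_C_mul_X_mul_eq_mul_rescale {q b c : ℂ} {f : ℂ⟦X⟧}
    (h : ∀ k, (1 - q ^ (k + 1)) * coeff (k + 1) f = (c - b * q ^ k) * coeff k f) :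
    (1 - C c * X) * f = (1 - C b * X) * rescale q f := by
  ext (_ | k)
  · simp only [sub_mul, one_mul, map_sub, mul_assoc, coeff_zero_X_mul, coeff_C_mul, mul_zero,
      sub_zero, coeff_rescale, pow_zero]
  · simp only [sub_mul, one_mul, map_sub, mul_assoc, coeff_succ_X_mul, coeff_C_mul, coeff_rescale]
    linear_combination h k

section qBinomSeries

variable (q a : ℂ)

noncomputable def qBinomSeries : ℂ⟦X⟧ :=
  mk fun m => qPoch q a m / qPoch q q m

noncomputable def qBinomSeriesInv : ℂ⟦X⟧ :=
  mk fun i => (∏ j ∈ range i, (a - q ^ j)) / qPoch q q i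

variable {q}

lemma coeff_qBinomSeries_succ (hq : ∀ k, q ^ (k + 1) ≠ 1) (k : ℕ) :
    (1 - q ^ (k + 1)) * coeff (k + 1) (qBinomSeries q a) =
      (1 - a * q ^ k) * coeff k (qBinomSeries q a) := by
  have := sub_ne_zero.2 (hq k).symm
  simp only [qBinomSeries, coeff_mk, qPoch_succ, ← pow_succ']
  field_simp

lemma coeff_qBinomSeriesInv_succ (hq : ∀ k, q ^ (k + 1) ≠ 1) (k : ℕ) :
    (1 - q ^ (k + 1)) * coeff (k + 1) (qBinomSeriesInv q a) =
      (a - q ^ k) * coeff k (qBinomSeriesInv q a) := by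
  have := sub_ne_zero.2 (hq k).symm
  simp only [qBinomSeriesInv, coeff_mk, qPoch_succ, prod_range_succ, ← pow_succ']
  field_simp

lemma one_sub_X_mul_qBinomSeries (hq : ∀ k, q ^ (k + 1) ≠ 1) :
    (1 - X) * qBinomSeries q a = (1 - C a * X) * rescale q (qBinomSeries q a) := by
  simpa using one_sub_C_mul_X_mul_eq_mul_rescale (c := 1) (coeff_qBinomSeries_succ a hq)

lemma one_sub_C_mul_X_mul_qBinomSeriesInv (hq : ∀ k, q ^ (k + 1) ≠ 1) :
    (1 - C a * X) * qBinomSeriesInv q a = (1 - X) * rescale q (qBinomSeriesInv q a) := by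
  simpa using one_sub_C_mul_X_mul_eq_mul_rescale (b := 1) fun k => by
    rw [one_mul]; exact coeff_qBinomSeriesInv_succ a hq k

theorem qBinomSeriesInv_mul_qBinomSeries (hq : ∀ k, q ^ (k + 1) ≠ 1) :
    qBinomSeriesInv q a * qBinomSeries q a = 1 := by
  set G := qBinomSeriesInv q a
  set F := qBinomSeries q a
  have hD : (1 - X) * (1 - C a * X) ≠ (0 : ℂ⟦X⟧) := fun h0 => by
    simpa using congrArg constantCoeff h0
  have hinvariant : rescale q (G * F) = G * F := mul_left_cancel₀ hD <| by
    calc (1 - X) * (1 - C a * X) * rescale q (G * F)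
        = ((1 - X) * rescale q G) * ((1 - C a * X) * rescale q F) := by rw [map_mul]; ring
      _ = (1 - X) * (1 - C a * X) * (G * F) := by
          rw [← one_sub_X_mul_qBinomSeries a hq, ← one_sub_C_mul_X_mul_qBinomSeriesInv a hq]
          ring
  ext (_ | k)
  · simp [G, F, qBinomSeries, qBinomSeriesInv, qPoch]
  · have hk := congrArg (coeff (k + 1)) hinvariant
    rw [coeff_rescale] at hk
    have : (q ^ (k + 1) - 1) * coeff (k + 1) (G * F) = 0 := by linear_combination hk
    simpa [sub_ne_zero.2 (hq k)] using this

end qBinomSeries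

lemma coeff_qBinomSeriesInv_qpow {q : ℂ} (hq : ∀ k, q ^ (k + 1) ≠ 1) {n i : ℕ} (hi : i ≤ n) :
    coeff i (qBinomSeriesInv q (q ^ n)) = (-1) ^ i * q ^ i.choose 2 * qBinom q n i := by
  obtain ⟨d, rfl⟩ := Nat.exists_eq_add_of_le hi
  rw [qBinomSeriesInv, coeff_mk, qBinom, Nat.add_sub_cancel_left,
    eq_div_of_mul_eq (qPoch_self_ne_zero hq d) (prod_range_pow_sub_pow_mul_qPoch q i d)]
  ring

lemma coeff_qBinomSeriesInv_qpow_of_lt (q : ℂ) {n i : ℕ} (hi : n < i) :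
    coeff i (qBinomSeriesInv q (q ^ n)) = 0 := by
  rw [qBinomSeriesInv, coeff_mk, prod_eq_zero (mem_range.2 hi) (sub_self (q ^ n)), zero_div]

lemma summable_qPoch_series {q u w : ℂ} (hq : ‖q‖ < 1) (hu : ‖u‖ ≤ 1) (hw : ‖w‖ < 1) (b c : ℂ) :
    Summable fun m : ℕ => u ^ m.choose 2 * qPoch q b m * w ^ m / (qPoch q q m * qPoch q c m) := by
  set ratio : ℂ → ℂ := fun z => (1 - b * z) / ((1 - q * z) * (1 - c * z))
  have hratio : Tendsto (fun m => ratio (q ^ m)) atTop (𝓝 1) := by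
    have hcont : ContinuousAt ratio 0 := by fun_prop (disch := simp)
    have h := hcont.tendsto.comp (tendsto_pow_atTop_nhds_zero_of_norm_lt_one hq)
    rwa [show ratio 0 = 1 by simp [ratio]] at h
  have hlim : Tendsto (fun m => ‖w‖ * ‖ratio (q ^ m)‖) atTop (𝓝 ‖w‖) := by
    simpa using hratio.norm.const_mul ‖w‖
  refine summable_of_ratio_norm_eventually_le (r := (1 + ‖w‖) / 2) (by linarith) ?_
  filter_upwards [hlim.eventually (eventually_le_nhds (by linarith : ‖w‖ < (1 + ‖w‖) / 2))]
    with m hm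
  have hstep : u ^ (m + 1).choose 2 * qPoch q b (m + 1) * w ^ (m + 1) /
      (qPoch q q (m + 1) * qPoch q c (m + 1)) =
      u ^ m.choose 2 * qPoch q b m * w ^ m / (qPoch q q m * qPoch q c m) *
        (u ^ m * (w * ratio (q ^ m))) := by
    simp only [Nat.choose_succ_succ, Nat.choose_one_right, qPoch_succ, ratio]
    generalize 1 - q * q ^ m = d
    generalize 1 - c * q ^ m = e
    ring
  rw [hstep, norm_mul (_ / _), mul_comm]
  gcongr
  calc ‖u ^ m * (w * ratio (q ^ m))‖ = ‖u‖ ^ m * (‖w‖ * ‖ratio (q ^ m)‖) := by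
        rw [norm_mul, norm_mul, norm_pow]
    _ ≤ 1 * ((1 + ‖w‖) / 2) := by gcongr; exact pow_le_one₀ (norm_nonneg u) hu
    _ = (1 + ‖w‖) / 2 := one_mul _

lemma sum_tsum_eq_tsum_sum_ite {M : Type*} [AddCommMonoid M] [TopologicalSpace M] [ContinuousAdd M]
    [T2Space M] (s : Finset ℕ) {f : ℕ → ℕ → M} (hf : ∀ i ∈ s, Summable (f i)) :
    ∑ i ∈ s, ∑' m, f i m = ∑' k, ∑ i ∈ s, if i ≤ k then f i (k - i) else 0 := by
  set F : ℕ → ℕ → M := fun i k => if i ≤ k then f i (k - i) else 0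
  have hF : ∀ i, F i ∘ (· + i) = f i := fun i => funext fun m => by simp [F]
  have hvanish : ∀ i, ∀ k ∉ Set.range (· + i), F i k = 0 := fun i k hk => by
    simp only [F, ite_eq_right_iff]
    exact fun hik => absurd ⟨k - i, Nat.sub_add_cancel hik⟩ hk
  change _ = ∑' k, ∑ i ∈ s, F i k
  rw [Summable.tsum_finsetSum fun i hi => ((add_left_injective i).summable_iff (hvanish i)).1
    ((hF i).symm ▸ hf i hi)]
  refine sum_congr rfl fun i _ => ?_
  rw [← hF i, ← (add_left_injective i).tsum_eq (Function.support_subset_iff'.2 (hvanish i))]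
  rfl

lemma sum_range_ite_le_eq_sum_range {M : Type*} [AddCommMonoid M] {f : ℕ → M} {n k : ℕ}
    (hf : ∀ i, n < i → i ≤ k → f i = 0) :
    ∑ i ∈ range (n + 1), (if i ≤ k then f i else 0) = ∑ i ∈ range (k + 1), f i := by
  rw [← sum_filter]
  refine sum_subset (fun i => by simp only [mem_filter, mem_range]; omega) fun i hi hi' => ?_
  simp only [mem_filter, mem_range, not_and] at hi hi'
  exact hf i (by omega) (by omega)

section Summand

variable (q a x u y : ℂ) (n : ℕ)

noncomputable def diagWeight (k : ℕ) : ℂ :=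
  u ^ k.choose 2 * (a * y) ^ k / qPoch q (a * q ^ n * x) k

noncomputable def summand (i m : ℕ) : ℂ :=
  (u * q) ^ i.choose 2 * qBinom q n i * ((-(a * y)) ^ i / qPoch q (a * q ^ n * x) i) *
    (u ^ m.choose 2 * qPoch q (q ^ n) m * (u ^ i * a * y) ^ m /
      (qPoch q q m * qPoch q (a * q ^ (n + i) * x) m))

variable {q a x u y n}

lemma summable_summand (hq : ‖q‖ < 1) (hu : ‖u‖ ≤ 1) (hay : ‖a * y‖ < 1) (i : ℕ) :
    Summable (summand q a x u y n i) := by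
  refine (summable_qPoch_series hq hu (lt_of_le_of_lt ?_ hay) _ _).mul_left _
  rw [mul_assoc, norm_mul (u ^ i), norm_pow]
  exact mul_le_of_le_one_left (norm_nonneg _) (pow_le_one₀ (norm_nonneg u) hu)

lemma summand_eq_diagWeight_mul (hq : ∀ k, q ^ (k + 1) ≠ 1) {i : ℕ} (hi : i ≤ n) (m : ℕ) :
    summand q a x u y n i m = diagWeight q a x u y n (i + m) *
      (coeff i (qBinomSeriesInv q (q ^ n)) * coeff m (qBinomSeries q (q ^ n))) := by
  rw [summand, diagWeight, coeff_qBinomSeriesInv_qpow hq hi, qBinomSeries, coeff_mk, qPoch_add,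
    Nat.add_choose_two, show a * q ^ n * x * q ^ i = a * q ^ (n + i) * x by ring]
  ring

lemma sum_range_summand_diag (hq : ∀ k, q ^ (k + 1) ≠ 1) (k : ℕ) :
    ∑ i ∈ range (n + 1), (if i ≤ k then summand q a x u y n i (k - i) else 0) =
      diagWeight q a x u y n k * coeff k (qBinomSeriesInv q (q ^ n) * qBinomSeries q (q ^ n)) := by
  calc _ = ∑ i ∈ range (n + 1), if i ≤ k then diagWeight q a x u y n k *
        (coeff i (qBinomSeriesInv q (q ^ n)) * coeff (k - i) (qBinomSeries q (q ^ n))) else 0 :=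
        sum_congr rfl fun i hi => ite_congr rfl (fun hik => by
          rw [summand_eq_diagWeight_mul hq (mem_range_succ_iff.1 hi), Nat.add_sub_cancel' hik])
          fun _ => rfl
    _ = _ := by
        rw [sum_range_ite_le_eq_sum_range fun i hni _ => by
            rw [coeff_qBinomSeriesInv_qpow_of_lt q hni, zero_mul, mul_zero],
          coeff_mul, Nat.sum_antidiagonal_eq_sum_range_succ (fun i j =>
            coeff i (qBinomSeriesInv q (q ^ n)) * coeff j (qBinomSeries q (q ^ n))), mul_sum]

end Summand

theorem stmt10_general (q a x u y : ℂ) (n : ℕ)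
    (hq1 : ‖q‖ < 1)
    (hu : ‖u‖ ≤ 1) (hay : ‖a * y‖ < 1) :
    ∑ i ∈ Finset.range (n + 1),
        (u * q) ^ (i.choose 2) * qBinom q n i *
          ((-(a * y)) ^ i / qPoch q (a * q ^ n * x) i) *
          ∑' m : ℕ,
            u ^ (m.choose 2) * qPoch q (q ^ n) m * (u ^ i * a * y) ^ m /
              (qPoch q q m * qPoch q (a * q ^ (n + i) * x) m) = 1 := by
  have hq : ∀ k, q ^ (k + 1) ≠ 1 := fun k h1 =>
    (pow_lt_one₀ (norm_nonneg q) hq1 k.succ_ne_zero).ne (by rw [← norm_pow, h1, norm_one])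
  calc _ = ∑ i ∈ range (n + 1), ∑' m, summand q a x u y n i m :=
        sum_congr rfl fun i _ => tsum_mul_left.symm
    _ = ∑' k, ∑ i ∈ range (n + 1), if i ≤ k then summand q a x u y n i (k - i) else 0 :=
        sum_tsum_eq_tsum_sum_ite _ fun i _ => summable_summand hq1 hu hay i
    _ = ∑' k, diagWeight q a x u y n k *
          coeff k (qBinomSeriesInv q (q ^ n) * qBinomSeries q (q ^ n)) :=
        tsum_congr (sum_range_summand_diag hq)
    _ = 1 := by
        simp [qBinomSeriesInv_mul_qBinomSeries _ hq, coeff_one, diagWeight, qPoch]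

theorem stmt10 (q a x u y : ℂ) (n : ℕ)
    (hq0 : 0 < ‖q‖) (hq1 : ‖q‖ < 1)
    (hu : ‖u‖ ≤ 1) (hay : ‖a * y‖ < 1) (hx : x ≠ 0)
    (h : ∀ j : ℕ, 1 - a * q ^ j * x ≠ 0) :
    ∑ i ∈ Finset.range (n + 1),
        (u * q) ^ (i.choose 2) * qBinom q n i *
          ((-(a * y)) ^ i / qPoch q (a * q ^ n * x) i) *
          ∑' m : ℕ,
            u ^ (m.choose 2) * qPoch q (q ^ n) m * (u ^ i * a * y) ^ m /
              (qPoch q q m * qPoch q (a * q ^ (n + i) * x) m) = 1 :=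
  stmt10_general q a x u y n hq1 hu hay
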